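/- In the double star graph with centers v0 and v0' having m and m' leaves respectively (m, m' ≥ 1), the Ollivier-Ricci curvature of the central edge (v0, v0'), computed with uniform measures on neighborhoods, equals κ(v0, v0') = 1 − (3 − 2/(m+1) − 2/(m'+1)) = −2 + 2/(m+1) + 2/(m'+1). -/

import Mathlib

open Finset

/-- The L1-Wasserstein (optimal transport) distance between two discrete probability
measures on the vertices of a graph, with the shortest-path metric as cost. -/
noncomputable def W1 {V : Type*} [Fintype V] (G : SimpleGraph V) (μ ν : V → ℝ) : ℝ :=
  sInf { c : ℝ | ∃ π : V → V → ℝ, (∀ a b, 0 ≤ π a b) ∧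
    (∀ a, ∑ b, π a b = μ a) ∧ (∀ b, ∑ a, π a b = ν b) ∧
    c = ∑ a, ∑ b, π a b * (G.dist a b : ℝ) }

/-- The uniform probability measure on the neighbors of `x`. -/
noncomputable def unifNbr {V : Type*} [Fintype V] [DecidableEq V] (G : SimpleGraph V)
    [DecidableRel G.Adj] (x : V) : V → ℝ :=
  fun u => if u ∈ G.neighborFinset x then 1 / (G.degree x : ℝ) else 0

/-- One-directional adjacency for the double star graph. -/
def doubleStarRel (m m' : ℕ) :
    (Fin (m + 1) ⊕ Fin (m' + 1)) → (Fin (m + 1) ⊕ Fin (m' + 1)) → Prop :=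
  fun x y =>
    (x = Sum.inl 0 ∧ ∃ i : Fin (m + 1), i ≠ 0 ∧ y = Sum.inl i) ∨
    (x = Sum.inr 0 ∧ ∃ j : Fin (m' + 1), j ≠ 0 ∧ y = Sum.inr j) ∨
    (x = Sum.inl 0 ∧ y = Sum.inr 0)

/-- The double star graph formed by joining the centers of a star with `m` leaves and a
star with `m'` leaves by an edge. -/
def doubleStar (m m' : ℕ) : SimpleGraph (Fin (m + 1) ⊕ Fin (m' + 1)) where
  Adj x y := x ≠ y ∧ (doubleStarRel m m' x y ∨ doubleStarRel m m' y x)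
  symm := ⟨by intro x y ⟨h1, h2⟩; exact ⟨h1.symm, h2.symm⟩⟩
  loopless := ⟨by intro x ⟨h1, _⟩; exact h1 rfl⟩

instance (m m' : ℕ) : DecidableRel (doubleStar m m').Adj := by
  intro x y
  unfold doubleStar doubleStarRel
  infer_instance

section Aux
open Sum SimpleGraph

variable {m m' : ℕ}

lemma adj_iff (x y) : (doubleStar m m').Adj x y ↔
    x ≠ y ∧ (doubleStarRel m m' x y ∨ doubleStarRel m m' y x) := Iff.rfl

lemma adj_inl0 (y) : (doubleStar m m').Adj (Sum.inl 0) y ↔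
    (∃ i : Fin (m+1), i ≠ 0 ∧ y = Sum.inl i) ∨ y = Sum.inr 0 := by
  rw [adj_iff]; unfold doubleStarRel; aesop

lemma adj_inr0 (y) : (doubleStar m m').Adj (Sum.inr 0) y ↔
    (∃ j : Fin (m'+1), j ≠ 0 ∧ y = Sum.inr j) ∨ y = Sum.inl 0 := by
  rw [adj_iff]; unfold doubleStarRel; aesop

lemma adj_leafL {i : Fin (m+1)} (hi : i ≠ 0) (y) :
    (doubleStar m m').Adj (Sum.inl i) y ↔ y = Sum.inl 0 := by
  rw [adj_iff]; unfold doubleStarRel; aesop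

lemma adj_leafR {j : Fin (m'+1)} (hj : j ≠ 0) (y) :
    (doubleStar m m').Adj (Sum.inr j) y ↔ y = Sum.inr 0 := by
  rw [adj_iff]; unfold doubleStarRel; aesop
open Finset Sum SimpleGraph

variable {m m' : ℕ}

lemma adj_c : (doubleStar m m').Adj (Sum.inl 0) (Sum.inr 0) := (adj_inl0 _).2 (Or.inr rfl)
lemma adj_l {i : Fin (m+1)} (hi : i ≠ 0) : (doubleStar m m').Adj (Sum.inl 0) (Sum.inl i) :=
  (adj_inl0 _).2 (Or.inl ⟨i, hi, rfl⟩)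
lemma adj_r {j : Fin (m'+1)} (hj : j ≠ 0) : (doubleStar m m').Adj (Sum.inr 0) (Sum.inr j) :=
  (adj_inr0 _).2 (Or.inl ⟨j, hj, rfl⟩)

lemma reach (x : Fin (m+1) ⊕ Fin (m'+1)) : (doubleStar m m').Reachable (Sum.inl 0) x := by
  rcases x with i | j
  · by_cases hi : i = 0
    · subst hi; rfl
    · exact (adj_l hi).reachable
  · by_cases hj : j = 0
    · subst hj; exact adj_c.reachable
    · exact adj_c.reachable.trans (adj_r hj).reachable

lemma reach' (x y : Fin (m+1) ⊕ Fin (m'+1)) : (doubleStar m m').Reachable x y :=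
  (reach x).symm.trans (reach y)

lemma two_le_dist {x y : Fin (m+1) ⊕ Fin (m'+1)} (hne : x ≠ y)
    (hadj : ¬ (doubleStar m m').Adj x y) : 2 ≤ (doubleStar m m').dist x y := by
  have h0 : (doubleStar m m').dist x y ≠ 0 :=
    (dist_ne_zero_iff_ne_and_reachable).2 ⟨hne, reach' x y⟩
  have h1 : (doubleStar m m').dist x y ≠ 1 := fun h => hadj (dist_eq_one_iff_adj.1 h)
  omega

lemma dist_cross {i : Fin (m+1)} {j : Fin (m'+1)} (hi : i ≠ 0) (hj : j ≠ 0) :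
    (doubleStar m m').dist (Sum.inl i) (Sum.inr j) = 3 := by
  have hle : (doubleStar m m').dist (Sum.inl i) (Sum.inr j) ≤ 3 := by
    have := SimpleGraph.dist_le
      (Walk.cons (adj_l hi).symm (Walk.cons adj_c (Walk.cons (adj_r (m:=m) hj) Walk.nil)))
    simpa using this
  have hge : 3 ≤ (doubleStar m m').dist (Sum.inl i) (Sum.inr j) := by
    by_contra h
    push_neg at h
    obtain ⟨p, hp⟩ := (reach' (Sum.inl i) (Sum.inr j)).exists_walk_length_eq_dist
    rw [← hp] at h
    -- p has length ≤ 2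
    cases p with
    | cons h1 q =>
      have hw : _ = Sum.inl (0 : Fin (m+1)) := (adj_leafL hi _).1 h1
      subst hw
      cases q with
      | cons h2 r =>
        have hw2 := (adj_inl0 _).1 h2
        cases r with
        | nil => rcases hw2 with ⟨i', _, hii⟩ | hii <;> simp_all
        | cons h3 s => simp [SimpleGraph.Walk.length_cons] at h; omega
  omega


lemma deg_inl0 : (doubleStar m m').degree (Sum.inl 0) = m + 1 := by
  rw [← SimpleGraph.card_neighborFinset_eq_degree]
  have : (doubleStar m m').neighborFinset (Sum.inl 0)
      = ((univ.erase 0).image (Sum.inl : Fin (m+1) → _)) ∪ {Sum.inr 0} := by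
    ext y
    simp only [SimpleGraph.mem_neighborFinset, adj_inl0, mem_union, mem_image, mem_erase,
      mem_singleton, mem_univ]
    aesop
  rw [this, card_union_of_disjoint, card_image_of_injective _ Sum.inl_injective]
  · simp [Finset.card_erase_of_mem]
  · simp
lemma deg_inr0 : (doubleStar m m').degree (Sum.inr 0) = m' + 1 := by
  rw [← SimpleGraph.card_neighborFinset_eq_degree]
  have : (doubleStar m m').neighborFinset (Sum.inr 0)
      = ((univ.erase 0).image (Sum.inr : Fin (m'+1) → _)) ∪ {Sum.inl 0} := by
    ext y
    simp only [SimpleGraph.mem_neighborFinset, adj_inr0, mem_union, mem_image, mem_erase,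
      mem_singleton, mem_univ]
    aesop
  rw [this, card_union_of_disjoint, card_image_of_injective _ Sum.inr_injective]
  · simp [Finset.card_erase_of_mem]
  · simp


lemma mu_inl (i : Fin (m+1)) : unifNbr (doubleStar m m') (Sum.inl 0) (Sum.inl i)
    = if i = 0 then 0 else 1/((m:ℝ)+1) := by
  by_cases hi : i = 0 <;>
    simp [unifNbr, SimpleGraph.mem_neighborFinset, adj_inl0, deg_inl0, hi]

lemma mu_inr (j : Fin (m'+1)) : unifNbr (doubleStar m m') (Sum.inl 0) (Sum.inr j)
    = if j = 0 then 1/((m:ℝ)+1) else 0 := by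
  by_cases hj : j = 0 <;>
    simp [unifNbr, SimpleGraph.mem_neighborFinset, adj_inl0, deg_inl0, hj]

lemma nu_inl (i : Fin (m+1)) : unifNbr (doubleStar m m') (Sum.inr 0) (Sum.inl i)
    = if i = 0 then 1/((m':ℝ)+1) else 0 := by
  by_cases hi : i = 0 <;>
    simp [unifNbr, SimpleGraph.mem_neighborFinset, adj_inr0, deg_inr0, hi]

lemma nu_inr (j : Fin (m'+1)) : unifNbr (doubleStar m m') (Sum.inr 0) (Sum.inr j)
    = if j = 0 then 0 else 1/((m':ℝ)+1) := by
  by_cases hj : j = 0 <;>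
    simp [unifNbr, SimpleGraph.mem_neighborFinset, adj_inr0, deg_inr0, hj]

lemma fin_sum_ite {n : ℕ} (p q : ℝ) :
    ∑ i : Fin (n+1), (if i = 0 then p else q) = p + n * q := by
  rw [Fin.sum_univ_succ]
  simp [Fin.succ_ne_zero, mul_comm]


/-- The explicit optimal transport plan. -/
noncomputable def plan (m m' : ℕ) :
    (Fin (m+1) ⊕ Fin (m'+1)) → (Fin (m+1) ⊕ Fin (m'+1)) → ℝ
  | Sum.inl i, Sum.inl j => if i ≠ 0 ∧ j = 0 then (1/((m':ℝ)+1))/m else 0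
  | Sum.inl i, Sum.inr j => if i ≠ 0 ∧ j ≠ 0 then
      (1 - 1/((m:ℝ)+1) - 1/((m':ℝ)+1))/(m*m') else 0
  | Sum.inr i, Sum.inr j => if i = 0 ∧ j ≠ 0 then (1/((m:ℝ)+1))/m' else 0
  | Sum.inr _, Sum.inl _ => 0

/-- The Kantorovich potential. -/
noncomputable def pot (m m' : ℕ) : (Fin (m+1) ⊕ Fin (m'+1)) → ℝ
  | Sum.inl i => if i = 0 then 1 else 2
  | Sum.inr j => if j = 0 then 0 else -1

lemma one_le_dist {x y : Fin (m+1) ⊕ Fin (m'+1)} (hne : x ≠ y) :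
    1 ≤ (doubleStar m m').dist x y := by
  have h0 : (doubleStar m m').dist x y ≠ 0 :=
    (SimpleGraph.dist_ne_zero_iff_ne_and_reachable).2 ⟨hne, reach' x y⟩
  omega

lemma pot_le_dist (x y : Fin (m+1) ⊕ Fin (m'+1)) :
    pot m m' x - pot m m' y ≤ ((doubleStar m m').dist x y : ℝ) := by
  have hd0 : (0:ℝ) ≤ ((doubleStar m m').dist x y : ℝ) := by positivity
  have cast1 : ∀ {u v : Fin (m+1) ⊕ Fin (m'+1)}, u ≠ v →
      (1:ℝ) ≤ ((doubleStar m m').dist u v : ℝ) := by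
    intro u v h
    exact_mod_cast Nat.cast_le.2 (one_le_dist h)
  have cast2 : ∀ {u v : Fin (m+1) ⊕ Fin (m'+1)}, u ≠ v → ¬ (doubleStar m m').Adj u v →
      (2:ℝ) ≤ ((doubleStar m m').dist u v : ℝ) := by
    intro u v h h'
    exact_mod_cast Nat.cast_le.2 (two_le_dist h h')
  have potL : ∀ i : Fin (m+1), pot m m' (Sum.inl i) = if i = 0 then 1 else 2 := fun _ => rfl
  have potR : ∀ j : Fin (m'+1), pot m m' (Sum.inr j) = if j = 0 then 0 else -1 := fun _ => rfl
  rcases x with i | i <;> rcases y with j | j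
  · rw [potL, potL]
    by_cases hi : i = 0 <;> by_cases hj : j = 0
    · rw [if_pos hi, if_pos hj]; linarith
    · rw [if_pos hi, if_neg hj]; linarith
    · rw [if_neg hi, if_pos hj]
      have := cast1 (show (Sum.inl i : Fin (m+1) ⊕ Fin (m'+1)) ≠ Sum.inl j by
        subst hj; simpa using hi)
      linarith
    · rw [if_neg hi, if_neg hj]; linarith
  · rw [potL, potR]
    by_cases hi : i = 0 <;> by_cases hj : j = 0
    · rw [if_pos hi, if_pos hj]
      have := cast1 (show (Sum.inl i : Fin (m+1) ⊕ Fin (m'+1)) ≠ Sum.inr j by simp)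
      linarith
    · rw [if_pos hi, if_neg hj]
      subst hi
      have := cast2 (show (Sum.inl (0:Fin (m+1)) : Fin (m+1) ⊕ Fin (m'+1)) ≠ Sum.inr j by simp)
        (by rw [adj_inl0]; rintro (⟨i', hi', h⟩ | h) <;> simp_all)
      linarith
    · rw [if_neg hi, if_pos hj]
      subst hj
      have := cast2 (show (Sum.inl i : Fin (m+1) ⊕ Fin (m'+1)) ≠ Sum.inr 0 by simp)
        (by rw [adj_leafL hi]; simp)
      linarith
    · rw [if_neg hi, if_neg hj]
      have h3 : (doubleStar m m').dist (Sum.inl i) (Sum.inr j) = 3 := dist_cross hi hj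
      rw [h3]; norm_num
  · rw [potR, potL]
    by_cases hi : i = 0 <;> by_cases hj : j = 0 <;>
      [rw [if_pos hi, if_pos hj]; rw [if_pos hi, if_neg hj];
       rw [if_neg hi, if_pos hj]; rw [if_neg hi, if_neg hj]] <;> linarith
  · rw [potR, potR]
    by_cases hi : i = 0 <;> by_cases hj : j = 0
    · rw [if_pos hi, if_pos hj]; linarith
    · rw [if_pos hi, if_neg hj]
      subst hi
      have := cast1 (show (Sum.inr (0:Fin (m'+1)) : Fin (m+1) ⊕ Fin (m'+1)) ≠ Sum.inr j by
        simpa using Ne.symm hj)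
      linarith
    · rw [if_neg hi, if_pos hj]; linarith
    · rw [if_neg hi, if_neg hj]; linarith

lemma dist_c : (doubleStar m m').dist (Sum.inl 0) (Sum.inr 0) = 1 :=
  SimpleGraph.dist_eq_one_iff_adj.2 adj_c

set_option maxHeartbeats 2000000 in
lemma W1_val (hm : 1 ≤ m) (hm' : 1 ≤ m') :
    W1 (doubleStar m m') (unifNbr (doubleStar m m') (Sum.inl 0))
        (unifNbr (doubleStar m m') (Sum.inr 0))
      = 3 - 2/((m:ℝ)+1) - 2/((m':ℝ)+1) := by
  have hmR : (1:ℝ) ≤ (m:ℝ) := by exact_mod_cast hm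
  have hm'R : (1:ℝ) ≤ (m':ℝ) := by exact_mod_cast hm'
  have hm0 : (m:ℝ) ≠ 0 := by linarith
  have hm'0 : (m':ℝ) ≠ 0 := by linarith
  have hA : (0:ℝ) < (m:ℝ)+1 := by linarith
  have hB : (0:ℝ) < (m':ℝ)+1 := by linarith
  set a : ℝ := 1/((m:ℝ)+1) with ha
  set b : ℝ := 1/((m':ℝ)+1) with hb
  set c : ℝ := (1 - a - b)/((m:ℝ)*(m':ℝ)) with hc
  have ha2 : a ≤ 1/2 := by
    rw [ha]; rw [div_le_div_iff₀ hA (by norm_num)]; linarith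
  have hb2 : b ≤ 1/2 := by
    rw [hb]; rw [div_le_div_iff₀ hB (by norm_num)]; linarith
  have ha0 : 0 ≤ a := by positivity
  have hb0 : 0 ≤ b := by positivity
  have hc0 : 0 ≤ c := by
    rw [hc]; apply div_nonneg (by linarith) (by positivity)
  -- plan equation lemmas
  have pLL : ∀ (i j : Fin (m+1)), plan m m' (Sum.inl i) (Sum.inl j)
      = if ¬ i = 0 ∧ j = 0 then b/m else 0 := fun _ _ => rfl
  have pLR : ∀ (i : Fin (m+1)) (j : Fin (m'+1)), plan m m' (Sum.inl i) (Sum.inr j)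
      = if ¬ i = 0 ∧ ¬ j = 0 then c else 0 := fun _ _ => rfl
  have pRR : ∀ (i j : Fin (m'+1)), plan m m' (Sum.inr i) (Sum.inr j)
      = if i = 0 ∧ ¬ j = 0 then a/m' else 0 := fun _ _ => rfl
  have pRL : ∀ (i : Fin (m'+1)) (j : Fin (m+1)), plan m m' (Sum.inr i) (Sum.inl j) = 0 :=
    fun _ _ => rfl
  -- distances
  have distL1 : ∀ i : Fin (m+1), ¬ i = 0 →
      (((doubleStar m m').dist (Sum.inl i) (Sum.inl 0) : ℕ) : ℝ) = 1 := by
    intro i hi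
    rw [SimpleGraph.dist_eq_one_iff_adj.2 (adj_l hi).symm]; norm_num
  have distR1 : ∀ j : Fin (m'+1), ¬ j = 0 →
      (((doubleStar m m').dist (Sum.inr 0) (Sum.inr j) : ℕ) : ℝ) = 1 := by
    intro j hj
    rw [SimpleGraph.dist_eq_one_iff_adj.2 (adj_r hj)]; norm_num
  -- row sums of the plan
  have row : ∀ x, ∑ y, plan m m' x y = unifNbr (doubleStar m m') (Sum.inl 0) x := by
    intro x
    rcases x with i | i
    · rw [Fintype.sum_sum_type, mu_inl]
      by_cases hi : i = 0
      · simp [pLL, pLR, hi]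
      · simp only [pLL, pLR, hi, not_false_iff, true_and, if_neg hi, ite_not, ↓reduceIte]
        rw [fin_sum_ite, fin_sum_ite]
        rw [hc, ha, hb]
        field_simp
        ring
    · rw [Fintype.sum_sum_type, mu_inr]
      by_cases hi : i = 0
      · simp only [pRL, pRR, hi, true_and, if_pos hi, ite_not, Finset.sum_const_zero, zero_add, ↓reduceIte]
        rw [fin_sum_ite]
        rw [ha]
        field_simp
        ring
      · simp [pRL, pRR, hi]
  -- column sums of the plan
  have col : ∀ y, ∑ x, plan m m' x y = unifNbr (doubleStar m m') (Sum.inr 0) y := by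
    intro y
    rcases y with j | j
    · rw [Fintype.sum_sum_type, nu_inl]
      by_cases hj : j = 0
      · simp only [pLL, pRL, hj, and_true, if_pos hj, ite_not, Finset.sum_const_zero, add_zero, ↓reduceIte]
        rw [fin_sum_ite]
        rw [hb]
        field_simp
        ring
      · simp [pLL, pRL, hj]
    · rw [Fintype.sum_sum_type, nu_inr]
      by_cases hj : j = 0
      · simp [pLR, pRR, hj]
      · simp only [pLR, pRR, hj, not_false_iff, and_true, if_neg hj, ite_not, ↓reduceIte]
        rw [fin_sum_ite, fin_sum_ite]
        rw [hc, ha, hb]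
        field_simp
        ring
  -- cost of the plan
  have cost : ∑ x, ∑ y, plan m m' x y * ((doubleStar m m').dist x y : ℝ)
      = 3 - 2*a - 2*b := by
    have rowL : ∀ i : Fin (m+1),
        ∑ y, plan m m' (Sum.inl i) y * ((doubleStar m m').dist (Sum.inl i) y : ℝ)
        = if i = 0 then 0 else b/m + (m':ℝ)*(3*c) := by
      intro i
      rw [Fintype.sum_sum_type]
      by_cases hi : i = 0
      · simp [pLL, pLR, hi]
      · rw [if_neg hi]
        have e1 : ∑ j : Fin (m+1),
            plan m m' (Sum.inl i) (Sum.inl j) * ((doubleStar m m').dist (Sum.inl i) (Sum.inl j) : ℝ)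
            = ∑ j : Fin (m+1), (if j = 0 then b/m else 0) := by
          refine Finset.sum_congr rfl fun j _ => ?_
          by_cases hj : j = 0
          · subst hj
            rw [pLL, if_pos ⟨hi, rfl⟩, if_pos rfl, distL1 i hi, mul_one]
          · rw [pLL, if_neg (by tauto), if_neg hj, zero_mul]
        have e2 : ∑ j : Fin (m'+1),
            plan m m' (Sum.inl i) (Sum.inr j) * ((doubleStar m m').dist (Sum.inl i) (Sum.inr j) : ℝ)
            = ∑ j : Fin (m'+1), (if j = 0 then 0 else 3*c) := by
          refine Finset.sum_congr rfl fun j _ => ?_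
          by_cases hj : j = 0
          · rw [pLR, if_neg (by tauto), if_pos hj, zero_mul]
          · rw [pLR, if_pos ⟨hi, hj⟩, if_neg hj, dist_cross hi hj]
            push_cast; ring
        rw [e1, e2, fin_sum_ite, fin_sum_ite]
        ring
    have rowR : ∀ i : Fin (m'+1),
        ∑ y, plan m m' (Sum.inr i) y * ((doubleStar m m').dist (Sum.inr i) y : ℝ)
        = if i = 0 then (m':ℝ)*(a/m') else 0 := by
      intro i
      rw [Fintype.sum_sum_type]
      by_cases hi : i = 0
      · rw [if_pos hi]
        subst hi
        have e1 : ∑ j : Fin (m+1),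
            plan m m' (Sum.inr (0:Fin (m'+1))) (Sum.inl j)
              * ((doubleStar m m').dist (Sum.inr 0) (Sum.inl j) : ℝ) = 0 := by
          simp [pRL]
        have e2 : ∑ j : Fin (m'+1),
            plan m m' (Sum.inr (0:Fin (m'+1))) (Sum.inr j)
              * ((doubleStar m m').dist (Sum.inr 0) (Sum.inr j) : ℝ)
            = ∑ j : Fin (m'+1), (if j = 0 then 0 else a/m') := by
          refine Finset.sum_congr rfl fun j _ => ?_
          by_cases hj : j = 0
          · rw [pRR, if_neg (by tauto), if_pos hj, zero_mul]
          · rw [pRR, if_pos ⟨rfl, hj⟩, if_neg hj, distR1 j hj, mul_one]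
        rw [e1, e2, fin_sum_ite]
        ring
      · rw [if_neg hi]
        simp [pRL, pRR, hi]
    calc ∑ x, ∑ y, plan m m' x y * ((doubleStar m m').dist x y : ℝ)
        = (∑ i : Fin (m+1), if i = 0 then (0:ℝ) else b/m + (m':ℝ)*(3*c))
          + ∑ i : Fin (m'+1), if i = 0 then (m':ℝ)*(a/m') else 0 := by
          rw [Fintype.sum_sum_type]
          congr 1
          · exact Finset.sum_congr rfl fun i _ => rowL i
          · exact Finset.sum_congr rfl fun i _ => rowR i
      _ = (0 + (m:ℝ)*(b/m + (m':ℝ)*(3*c))) + ((m':ℝ)*(a/m') + (m':ℝ)*0) := by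
          rw [fin_sum_ite, fin_sum_ite]
      _ = 3 - 2*a - 2*b := by
          rw [hc, ha, hb]
          field_simp
          ring
  -- nonnegativity of the plan
  have hpos : ∀ x y, 0 ≤ plan m m' x y := by
    intro x y
    rcases x with i | i <;> rcases y with j | j
    · rw [pLL]; split_ifs
      · positivity
      · exact le_refl 0
    · rw [pLR]; split_ifs
      · exact hc0
      · exact le_refl 0
    · rw [pRL]
    · rw [pRR]; split_ifs
      · positivity
      · exact le_refl 0
  -- value of ∑ pot · μ
  have sumMu : ∑ x, pot m m' x * unifNbr (doubleStar m m') (Sum.inl 0) x = (m:ℝ)*(2*a) := by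
    rw [Fintype.sum_sum_type]
    have e1 : ∑ i : Fin (m+1), pot m m' (Sum.inl i) * unifNbr (doubleStar m m') (Sum.inl 0) (Sum.inl i)
        = ∑ i : Fin (m+1), (if i = 0 then 0 else 2*a) := by
      refine Finset.sum_congr rfl fun i _ => ?_
      rw [mu_inl]
      by_cases hi : i = 0 <;> simp [pot, hi, ha]
    have e2 : ∑ j : Fin (m'+1), pot m m' (Sum.inr j) * unifNbr (doubleStar m m') (Sum.inl 0) (Sum.inr j)
        = 0 := by
      refine Finset.sum_eq_zero fun j _ => ?_
      rw [mu_inr]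
      by_cases hj : j = 0 <;> simp [pot, hj]
    rw [e1, e2, fin_sum_ite]
    ring
  have sumNu : ∑ y, pot m m' y * unifNbr (doubleStar m m') (Sum.inr 0) y = b + (m':ℝ)*(-b) := by
    rw [Fintype.sum_sum_type]
    have e1 : ∑ i : Fin (m+1), pot m m' (Sum.inl i) * unifNbr (doubleStar m m') (Sum.inr 0) (Sum.inl i)
        = ∑ i : Fin (m+1), (if i = 0 then b else 0) := by
      refine Finset.sum_congr rfl fun i _ => ?_
      rw [nu_inl]
      by_cases hi : i = 0 <;> simp [pot, hi, hb]
    have e2 : ∑ j : Fin (m'+1), pot m m' (Sum.inr j) * unifNbr (doubleStar m m') (Sum.inr 0) (Sum.inr j)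
        = ∑ j : Fin (m'+1), (if j = 0 then 0 else -b) := by
      refine Finset.sum_congr rfl fun j _ => ?_
      rw [nu_inr]
      by_cases hj : j = 0 <;> simp [pot, hj, hb]
    rw [e1, e2, fin_sum_ite, fin_sum_ite]
    ring
  -- the lower bound for every transport plan
  have lower : ∀ z ∈ { z : ℝ | ∃ π : (Fin (m+1) ⊕ Fin (m'+1)) → (Fin (m+1) ⊕ Fin (m'+1)) → ℝ,
      (∀ x y, 0 ≤ π x y) ∧ (∀ x, ∑ y, π x y = unifNbr (doubleStar m m') (Sum.inl 0) x) ∧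
      (∀ y, ∑ x, π x y = unifNbr (doubleStar m m') (Sum.inr 0) y) ∧
      z = ∑ x, ∑ y, π x y * ((doubleStar m m').dist x y : ℝ) },
      3 - 2*a - 2*b ≤ z := by
    rintro z ⟨π, hπ0, hπ1, hπ2, rfl⟩
    have h1 : ∑ x, ∑ y, π x y * (pot m m' x - pot m m' y)
        ≤ ∑ x, ∑ y, π x y * ((doubleStar m m').dist x y : ℝ) :=
      Finset.sum_le_sum fun x _ => Finset.sum_le_sum fun y _ =>
        mul_le_mul_of_nonneg_left (pot_le_dist x y) (hπ0 x y)
    have t1 : ∀ x : Fin (m+1) ⊕ Fin (m'+1), ∑ y, π x y * (pot m m' x - pot m m' y)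
        = pot m m' x * (∑ y, π x y) - ∑ y, π x y * pot m m' y := by
      intro x
      simp only [mul_sub]
      rw [Finset.sum_sub_distrib]
      congr 1
      rw [Finset.mul_sum]
      exact Finset.sum_congr rfl fun y _ => mul_comm _ _
    have h2 : ∑ x, ∑ y, π x y * (pot m m' x - pot m m' y) = 3 - 2*a - 2*b := by
      calc ∑ x, ∑ y, π x y * (pot m m' x - pot m m' y)
          = ∑ x, (pot m m' x * (∑ y, π x y) - ∑ y, π x y * pot m m' y) :=
            Finset.sum_congr rfl fun x _ => t1 x
        _ = (∑ x, pot m m' x * (∑ y, π x y)) - ∑ x, ∑ y, π x y * pot m m' y :=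
            Finset.sum_sub_distrib ..
        _ = (∑ x, pot m m' x * unifNbr (doubleStar m m') (Sum.inl 0) x)
            - ∑ y, ∑ x, π x y * pot m m' y := by
            rw [Finset.sum_comm]
            congr 1
            exact Finset.sum_congr rfl fun x _ => by rw [hπ1]
        _ = (∑ x, pot m m' x * unifNbr (doubleStar m m') (Sum.inl 0) x)
            - ∑ y, pot m m' y * unifNbr (doubleStar m m') (Sum.inr 0) y := by
            congr 1
            refine Finset.sum_congr rfl fun y _ => ?_
            rw [← Finset.sum_mul, hπ2, mul_comm]
        _ = 3 - 2*a - 2*b := by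
            rw [sumMu, sumNu, ha, hb]
            field_simp
            ring
    linarith
  have hmem : 3 - 2*a - 2*b ∈ { z : ℝ | ∃ π : (Fin (m+1) ⊕ Fin (m'+1)) → (Fin (m+1) ⊕ Fin (m'+1)) → ℝ,
      (∀ x y, 0 ≤ π x y) ∧ (∀ x, ∑ y, π x y = unifNbr (doubleStar m m') (Sum.inl 0) x) ∧
      (∀ y, ∑ x, π x y = unifNbr (doubleStar m m') (Sum.inr 0) y) ∧
      z = ∑ x, ∑ y, π x y * ((doubleStar m m').dist x y : ℝ) } :=
    ⟨plan m m', hpos, row, col, cost.symm⟩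
  unfold W1
  rw [show (3:ℝ) - 2/((m:ℝ)+1) - 2/((m':ℝ)+1) = 3 - 2*a - 2*b by rw [ha, hb]; ring]
  exact le_antisymm (csInf_le ⟨3 - 2*a - 2*b, fun z hz => lower z hz⟩ hmem)
    (le_csInf ⟨_, hmem⟩ lower)


end Aux

open Sum SimpleGraph

/-- In the double star graph with centers `v0 = Sum.inl 0` and `v0' = Sum.inr 0` having
`m` and `m'` leaves (`m, m' ≥ 1`), the Ollivier-Ricci curvature of the central edge,
computed with uniform measures on neighborhoods, equals
`1 − (3 − 2/(m+1) − 2/(m'+1)) = −2 + 2/(m+1) + 2/(m'+1)`. -/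
theorem ollivier_doubleStar (m m' : ℕ) (hm : 1 ≤ m) (hm' : 1 ≤ m') :
    1 - W1 (doubleStar m m') (unifNbr (doubleStar m m') (Sum.inl 0))
            (unifNbr (doubleStar m m') (Sum.inr 0))
          / ((doubleStar m m').dist (Sum.inl 0) (Sum.inr 0) : ℝ)
      = -2 + 2 / ((m : ℝ) + 1) + 2 / ((m' : ℝ) + 1) := by
  rw [W1_val hm hm', dist_c]
  norm_num
  ring
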